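/- Let S, ε, ε' be square-integrable real random variables on a probability space with ε independent of S, ε' independent of S, and ε independent of ε', and let c ≠ 0 be a real number. Define the anchor features x := S + ε and x' := c·S + ε'. Then the noise variance of the first anchor is identified as Var(ε) = Var(x) − Cov(x, x')/c. -/

import Mathlib

open MeasureTheory ProbabilityTheory

/-! Independent noises contribute nothing to the covariance of the anchors, so
`Cov(x, x') = c Var(S)`, while `Var(x) = Var(S) + Var(ε)`. -/

/-- The covariance of two real-valued random variables:
`Cov(U, V) = E[(U − E[U]) * (V − E[V])]`. -/
noncomputable def cov {Ω : Type*} [MeasurableSpace Ω] (P : Measure Ω) (U V : Ω → ℝ) : ℝ :=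
  ∫ ω, (U ω - ∫ ω', U ω' ∂P) * (V ω - ∫ ω', V ω' ∂P) ∂P

lemma cov_eq_covariance {Ω : Type*} [MeasurableSpace Ω] (P : Measure Ω) (U V : Ω → ℝ) :
    cov P U V = covariance U V P :=
  rfl

lemma covariance_add_add_of_indepFun {Ω : Type*} [MeasurableSpace Ω] {μ : Measure Ω}
    [IsFiniteMeasure μ] {X Y ε ε' : Ω → ℝ}
    (hX : MemLp X 2 μ) (hY : MemLp Y 2 μ) (hε : MemLp ε 2 μ) (hε' : MemLp ε' 2 μ)
    (hXε' : IndepFun X ε' μ) (hεY : IndepFun ε Y μ) (hεε' : IndepFun ε ε' μ) :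
    covariance (X + ε) (Y + ε') μ = covariance X Y μ := by
  rw [covariance_add_left hX hε (hY.add hε'), covariance_add_right hX hY hε',
    covariance_add_right hε hY hε', hXε'.covariance_eq_zero hX hε',
    hεY.covariance_eq_zero hε hY, hεε'.covariance_eq_zero hε hε']
  ring

/-- The paper's Lemma 2: for anchor features `x = S + ε` and `x' = c·S + ε'` with mutually
independent square-integrable noises independent of the signal and `c ≠ 0`, the noise variance
of the first anchor is identified as `Var(ε) = Var(x) − Cov(x, x')/c`. -/
theorem anchor_noise_variance_identified {Ω : Type*} [MeasurableSpace Ω] (P : Measure Ω)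
    [IsProbabilityMeasure P] (S ε ε' : Ω → ℝ)
    (hS : MemLp S 2 P) (hε : MemLp ε 2 P) (hε' : MemLp ε' 2 P)
    (hεS : IndepFun ε S P) (hε'S : IndepFun ε' S P) (hεε' : IndepFun ε ε' P)
    (c : ℝ) (hc : c ≠ 0) :
    variance ε P = variance (S + ε) P - cov P (S + ε) (c • S + ε') / c := by
  have hcov : cov P (S + ε) (c • S + ε') = c * variance S P := by
    rw [cov_eq_covariance, covariance_add_add_of_indepFun hS (hS.const_smul c) hε hε'
        (hε'S.symm) (hεS.comp measurable_id (measurable_const_smul c)) hεε',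
      covariance_smul_right, covariance_self hS.aemeasurable]
  rw [hεS.symm.variance_add hS hε, hcov, mul_div_cancel_left₀ _ hc]
  ring
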